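/- arXiv:2404.14628 — 3 statements merged into one kernel-verified Lean document; each statement's English description precedes it below -/
import Mathlib

section
/- Fix C ≥ 1. For all real x, t, s ≥ 1 one has the uniform estimate #{n ≤ x : ∑_{p | n, p > t} 1/p ≥ 1/s} ≪_C x·e^{−Ct/s}, where the sum is over prime divisors p of n exceeding t and the implied constant depends only on C. -/
open Finset Real

private lemma exp_le_one_add' (u C : ℝ) (hu0 : 0 ≤ u) (huC : u ≤ C) :
    Real.exp u ≤ 1 + u * Real.exp C := by
  have h1 : (-u) + 1 ≤ Real.exp (-u) := Real.add_one_le_exp _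
  have h2 : Real.exp (-u) * Real.exp u = 1 := by
    rw [← Real.exp_add]; simp
  have h3 : Real.exp u ≤ Real.exp C := Real.exp_le_exp.2 huC
  have h4 : 0 < Real.exp u := Real.exp_pos u
  nlinarith [mul_nonneg hu0 h4.le]

private lemma sum_inv_sq_le' (k : ℕ) (hk : 1 ≤ k) (N : ℕ) :
    ∑ m ∈ Finset.Ioc k N, (1 : ℝ) / (m : ℝ) ^ 2 ≤ 1 / k - 1 / (max k N : ℕ) := by
  induction N with
  | zero => simp [Finset.Ioc_eq_empty_of_le, hk, Nat.max_eq_left (Nat.zero_le k)]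
  | succ N ih =>
    rcases le_or_gt (N + 1) k with h | h
    · rw [Finset.Ioc_eq_empty (by omega), Nat.max_eq_left (by omega)]
      simp
    · have hkN : k ≤ N := by omega
      rw [Finset.sum_Ioc_succ_top hkN]
      have hmax : max k N = N := Nat.max_eq_right hkN
      have hmax' : max k (N + 1) = N + 1 := Nat.max_eq_right (by omega)
      rw [hmax'] at *
      rw [hmax] at ih
      have hN1 : (1 : ℝ) ≤ (N : ℝ) := by exact_mod_cast hk.trans hkN
      have hstep : (1 : ℝ) / ((N + 1 : ℕ) : ℝ) ^ 2 ≤ 1 / N - 1 / ((N + 1 : ℕ) : ℝ) := by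
        push_cast
        rw [div_sub_div _ _ (by positivity) (by positivity),
          div_le_div_iff₀ (by positivity) (by positivity)]
        ring_nf
        nlinarith
      linarith

/-- Few numbers with many large prime factors: for fixed `C ≥ 1`, uniformly in
`x, t, s ≥ 1`, `#{n ≤ x : ∑_{p | n, p > t} 1/p ≥ 1/s} ≪_C x e^{-Ct/s}`. -/
theorem few_numbers_with_large_L (C : ℝ) (hC : 1 ≤ C) :
    ∃ K : ℝ, 0 < K ∧ ∀ x t s : ℝ, 1 ≤ x → 1 ≤ t → 1 ≤ s →
      (Nat.card {n : ℕ | 1 ≤ n ∧ (n : ℝ) ≤ x ∧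
          1 / s ≤ ∑ p ∈ n.primeFactors.filter (fun p : ℕ => t < (p : ℝ)), (1 : ℝ) / p} : ℝ)
        ≤ K * x * Real.exp (-C * t / s) := by
  refine ⟨Real.exp (2 * C * Real.exp C), Real.exp_pos _, ?_⟩
  intro x t s hx ht hs
  have hx0 : (0 : ℝ) ≤ x := by linarith
  have ht0 : (0 : ℝ) < t := by linarith
  have hs0 : (0 : ℝ) < s := by linarith
  have hC0 : (0 : ℝ) < C := by linarith
  set N := ⌊x⌋₊ with hNdef
  have hNx : (N : ℝ) ≤ x := Nat.floor_le hx0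
  set L : ℕ → ℝ := fun n : ℕ =>
    ∑ p ∈ n.primeFactors.filter (fun p : ℕ => t < (p : ℝ)), (1 : ℝ) / p with hL
  set F : Finset ℕ := (Finset.Ioc 0 N).filter (fun n => 1 / s ≤ L n) with hF
  have hset : {n : ℕ | 1 ≤ n ∧ (n : ℝ) ≤ x ∧
      1 / s ≤ ∑ p ∈ n.primeFactors.filter (fun p : ℕ => t < (p : ℝ)), (1 : ℝ) / p} = ↑F := by
    ext n
    simp only [Set.mem_setOf_eq, hF, Finset.coe_filter, Finset.mem_Ioc, Set.mem_setOf_eq]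
    constructor
    · rintro ⟨h1, h2, h3⟩
      exact ⟨⟨h1, Nat.le_floor h2⟩, h3⟩
    · rintro ⟨⟨h1, h2⟩, h3⟩
      exact ⟨h1, le_trans (by exact_mod_cast h2) hNx, h3⟩
  rw [hset, Nat.card_coe_set_eq, Set.ncard_coe_finset]
  set Q : Finset ℕ := (Finset.Ioc 0 N).filter (fun p : ℕ => p.Prime ∧ t < (p : ℝ)) with hQ
  set A : ℝ := C * t * Real.exp C with hA
  have hA0 : 0 < A := by positivity
  have key : ∀ n ∈ Finset.Ioc 0 N,
      Real.exp (C * t * L n) ≤ ∏ p ∈ Q, (1 + if p ∣ n then A / (p : ℝ) else 0) := by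
    intro n hn
    rw [Finset.mem_Ioc] at hn
    have hPn : n.primeFactors.filter (fun p : ℕ => t < (p : ℝ)) = Q.filter (· ∣ n) := by
      ext p
      simp only [Finset.mem_filter, Nat.mem_primeFactors, hQ, Finset.mem_Ioc]
      constructor
      · rintro ⟨⟨hp, hpn, -⟩, hpt⟩
        exact ⟨⟨⟨hp.pos, (Nat.le_of_dvd (by omega) hpn).trans hn.2⟩, hp, hpt⟩, hpn⟩
      · rintro ⟨⟨-, hp, hpt⟩, hpn⟩
        exact ⟨⟨hp, hpn, by omega⟩, hpt⟩
    calc Real.exp (C * t * L n)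
        = ∏ p ∈ n.primeFactors.filter (fun p : ℕ => t < (p : ℝ)), Real.exp (C * t * (1 / p)) := by
          rw [hL, Finset.mul_sum, Real.exp_sum]
      _ ≤ ∏ p ∈ n.primeFactors.filter (fun p : ℕ => t < (p : ℝ)), (1 + A / p) := by
          apply Finset.prod_le_prod (fun p _ => (Real.exp_pos _).le)
          intro p hp
          rw [Finset.mem_filter] at hp
          have hpt : t < (p : ℝ) := hp.2
          have hp0 : (0 : ℝ) < p := ht0.trans hpt
          have h1 : C * t * (1 / p) ≤ C := by
            rw [mul_one_div, div_le_iff₀ hp0]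
            nlinarith
          have := exp_le_one_add' (C * t * (1 / p)) C (by positivity) h1
          calc Real.exp (C * t * (1 / p)) ≤ 1 + C * t * (1 / p) * Real.exp C := this
            _ = 1 + A / p := by rw [hA]; ring
      _ = ∏ p ∈ Q.filter (· ∣ n), (1 + A / p) := by rw [hPn]
      _ = ∏ p ∈ Q, (1 + if p ∣ n then A / (p : ℝ) else 0) := by
          rw [Finset.prod_filter]
          exact Finset.prod_congr rfl fun p _ => by split_ifs <;> simp
  have main : ∑ n ∈ Finset.Ioc 0 N, Real.exp (C * t * L n)
      ≤ x * Real.exp (2 * C * Real.exp C) := by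
    have hQprime : ∀ p ∈ Q, Nat.Prime p := by
      intro p hp; rw [hQ, Finset.mem_filter] at hp; exact hp.2.1
    have hQpos : ∀ p ∈ Q, (0 : ℝ) < p := by
      intro p hp; exact_mod_cast (hQprime p hp).pos
    calc ∑ n ∈ Finset.Ioc 0 N, Real.exp (C * t * L n)
        ≤ ∑ n ∈ Finset.Ioc 0 N, ∏ p ∈ Q, (1 + if p ∣ n then A / (p : ℝ) else 0) :=
          Finset.sum_le_sum key
      _ = ∑ n ∈ Finset.Ioc 0 N, ∑ S ∈ Q.powerset, ∏ p ∈ S, (if p ∣ n then A / (p : ℝ) else 0) := by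
          refine Finset.sum_congr rfl fun n _ => ?_
          rw [show (fun p : ℕ => 1 + if p ∣ n then A / (p : ℝ) else 0)
              = fun p : ℕ => (if p ∣ n then A / (p : ℝ) else 0) + 1 by funext p; ring]
          rw [Finset.prod_add]
          simp
      _ = ∑ S ∈ Q.powerset, ∑ n ∈ Finset.Ioc 0 N, ∏ p ∈ S, (if p ∣ n then A / (p : ℝ) else 0) :=
          Finset.sum_comm
      _ ≤ ∑ S ∈ Q.powerset, x * ∏ p ∈ S, A / (p : ℝ) ^ 2 := by
          refine Finset.sum_le_sum fun S hS => ?_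
          rw [Finset.mem_powerset] at hS
          have hSpos : ∀ p ∈ S, (0 : ℝ) < p := fun p hp => hQpos p (hS hp)
          have hprod : ∀ n : ℕ, (∏ p ∈ S, (if p ∣ n then A / (p : ℝ) else 0))
              = if (∏ p ∈ S, p) ∣ n then ∏ p ∈ S, A / (p : ℝ) else 0 := by
            intro n
            by_cases h : ∀ p ∈ S, p ∣ n
            · rw [if_pos (Finset.prod_primes_dvd n
                (fun p hp => (hQprime p (hS hp)).prime) h)]
              exact Finset.prod_congr rfl fun p hp => if_pos (h p hp)
            · push_neg at h
              obtain ⟨p, hpS, hpn⟩ := h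
              rw [if_neg (fun hd => hpn (dvd_trans (Finset.dvd_prod_of_mem _ hpS) hd))]
              exact Finset.prod_eq_zero hpS (by simp [hpn])
            -- end
          have hw0 : (0 : ℝ) ≤ ∏ p ∈ S, A / (p : ℝ) :=
            Finset.prod_nonneg fun p hp => div_nonneg hA0.le (hSpos p hp).le
          calc ∑ n ∈ Finset.Ioc 0 N, ∏ p ∈ S, (if p ∣ n then A / (p : ℝ) else 0)
              = ∑ n ∈ (Finset.Ioc 0 N).filter ((∏ p ∈ S, p) ∣ ·), ∏ p ∈ S, A / (p : ℝ) := by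
                rw [Finset.sum_filter]
                exact Finset.sum_congr rfl fun n _ => hprod n
            _ = (((Finset.Ioc 0 N).filter ((∏ p ∈ S, p) ∣ ·)).card : ℝ) * ∏ p ∈ S, A / (p : ℝ) := by
                rw [Finset.sum_const, nsmul_eq_mul]
            _ ≤ (x / (∏ p ∈ S, p : ℕ)) * ∏ p ∈ S, A / (p : ℝ) := by
                apply mul_le_mul_of_nonneg_right ?_ hw0
                rw [Nat.Ioc_filter_dvd_card_eq_div]
                refine le_trans Nat.cast_div_le ?_
                gcongr
            _ = x * ∏ p ∈ S, A / (p : ℝ) ^ 2 := by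
                push_cast
                rw [div_mul_eq_mul_div, mul_div_assoc, ← Finset.prod_div_distrib]
                congr 1
                exact Finset.prod_congr rfl fun p hp => by rw [sq, div_div]
      _ = x * ∑ S ∈ Q.powerset, ∏ p ∈ S, A / (p : ℝ) ^ 2 := by rw [Finset.mul_sum]
      _ = x * ∏ p ∈ Q, (1 + A / (p : ℝ) ^ 2) := by
          congr 1
          rw [show (fun p : ℕ => 1 + A / (p : ℝ) ^ 2)
              = fun p : ℕ => A / (p : ℝ) ^ 2 + 1 by funext p; ring]
          rw [Finset.prod_add]
          simp
      _ ≤ x * Real.exp (2 * C * Real.exp C) := by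
          apply mul_le_mul_of_nonneg_left ?_ hx0
          calc ∏ p ∈ Q, (1 + A / (p : ℝ) ^ 2)
              ≤ ∏ p ∈ Q, Real.exp (A / (p : ℝ) ^ 2) := by
                apply Finset.prod_le_prod
                · intro p hp
                  have := hQpos p hp
                  positivity
                · intro p hp
                  have h := Real.add_one_le_exp (A / (p : ℝ) ^ 2)
                  linarith
            _ = Real.exp (∑ p ∈ Q, A / (p : ℝ) ^ 2) := (Real.exp_sum _ _).symm
            _ ≤ Real.exp (2 * C * Real.exp C) := by
                apply Real.exp_le_exp.2
                set k := ⌊t⌋₊ with hk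
                have hk1 : 1 ≤ k := Nat.le_floor (by exact_mod_cast ht)
                have hk0 : (0 : ℝ) < k := by exact_mod_cast hk1
                have hQsub : Q ⊆ Finset.Ioc k N := by
                  intro p hp
                  rw [hQ, Finset.mem_filter, Finset.mem_Ioc] at hp
                  rw [Finset.mem_Ioc]
                  exact ⟨(Nat.floor_lt ht0.le).2 hp.2.2, hp.1.2⟩
                calc ∑ p ∈ Q, A / (p : ℝ) ^ 2 = A * ∑ p ∈ Q, 1 / (p : ℝ) ^ 2 := by
                      rw [Finset.mul_sum]; exact Finset.sum_congr rfl fun p _ => by ring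
                  _ ≤ A * ∑ m ∈ Finset.Ioc k N, 1 / (m : ℝ) ^ 2 := by
                      apply mul_le_mul_of_nonneg_left ?_ hA0.le
                      apply Finset.sum_le_sum_of_subset_of_nonneg hQsub
                      intro m hm _
                      rcases Nat.eq_zero_or_pos m with h | h
                      · simp [h]
                      · have : (0:ℝ) < m := by exact_mod_cast h
                        positivity
                  _ ≤ A * (2 / t) := by
                      apply mul_le_mul_of_nonneg_left ?_ hA0.le
                      refine le_trans (sum_inv_sq_le' k hk1 N) ?_
                      have h1 : t < (k : ℝ) + 1 := Nat.lt_floor_add_one t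
                      have h2 : (0:ℝ) ≤ 1 / (max k N : ℕ) := by positivity
                      have hk1' : (1:ℝ) ≤ k := by exact_mod_cast hk1
                      have h3 : 1 / (k:ℝ) ≤ 2 / t := by
                        rw [div_le_div_iff₀ hk0 ht0]
                        linarith
                      linarith
                  _ = 2 * C * Real.exp C := by
                      rw [hA]; field_simp
  have chern : (F.card : ℝ) * Real.exp (C * t / s) ≤ ∑ n ∈ Finset.Ioc 0 N, Real.exp (C * t * L n) := by
    have h1 : ∀ n ∈ F, Real.exp (C * t / s) ≤ Real.exp (C * t * L n) := by
      intro n hn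
      rw [hF, Finset.mem_filter] at hn
      apply Real.exp_le_exp.2
      rw [div_eq_mul_one_div]
      exact mul_le_mul_of_nonneg_left (le_trans hn.2 le_rfl) (by positivity)
    calc (F.card : ℝ) * Real.exp (C * t / s) ≤ ∑ n ∈ F, Real.exp (C * t * L n) := by
          have := Finset.card_nsmul_le_sum F (fun n => Real.exp (C * t * L n)) _ h1
          simpa [nsmul_eq_mul] using this
      _ ≤ ∑ n ∈ Finset.Ioc 0 N, Real.exp (C * t * L n) :=
          Finset.sum_le_sum_of_subset_of_nonneg (Finset.filter_subset _ _)
            (fun i _ _ => (Real.exp_pos _).le)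
  have hexp : Real.exp (-C * t / s) * Real.exp (C * t / s) = 1 := by
    rw [← Real.exp_add]; ring_nf; exact Real.exp_zero
  have h2 := chern.trans main
  have h3 := mul_le_mul_of_nonneg_right h2 (Real.exp_pos (-C * t / s)).le
  calc (F.card : ℝ) = (F.card : ℝ) * Real.exp (C * t / s) * Real.exp (-C * t / s) := by
        rw [mul_assoc, mul_comm (Real.exp _), hexp, mul_one]
    _ ≤ x * Real.exp (2 * C * Real.exp C) * Real.exp (-C * t / s) := h3
    _ = Real.exp (2 * C * Real.exp C) * x * Real.exp (-C * t / s) := by ring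
end

section
/- Fix C ≥ 1 and κ > 0. For all real x, t ≥ 1 one has the uniform estimate #{n ≤ x : #{p prime : p | n, p ≤ t} ≥ κ·log t} ≪_{C,κ} x·t^{−C}, where the implied constant depends only on C and κ. -/
/-!
Rankin's trick. Put `z = exp ((C + 1) / κ)` and let `ω_t n` count the prime factors `p ≤ t`
of `n`. Every counted `n` has `z ^ ω_t n ≥ t ^ (C + 1)`, and expanding
`z ^ ω_t n = (1 + (z - 1)) ^ ω_t n` over subsets of those primes and swapping sums bounds
`∑_{n ≤ x} z ^ ω_t n` by `x ∏_{p ≤ t} (1 + (z - 1) / p) ≤ x exp ((z - 1) ∑_{p ≤ t} 1 / p)`.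
Chebyshev's bound `θ y ≤ y log 4` makes the primes in `(2 ^ k, 2 ^ (k + 1)]` contribute at most
`4 / k` to `∑ 1 / p`, hence `∑_{p ≤ t} 1 / p ≤ ε log t + O_ε(1)` for every `ε > 0`; with
`ε = 1 / (z - 1)` the exponential is `O(t)`.
-/

open Finset Real Chebyshev

lemma sum_inv_primesLE_mono {m n : ℕ} (h : m ≤ n) :
    ∑ p ∈ Nat.primesLE m, (p : ℝ)⁻¹ ≤ ∑ p ∈ Nat.primesLE n, (p : ℝ)⁻¹ :=
  sum_le_sum_of_subset_of_nonneg (Nat.primesLE_mono h) fun _ _ _ => by positivity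

lemma sum_inv_primesLE_two_pow_succ_le (k : ℕ) (hk : k ≠ 0) :
    ∑ p ∈ Nat.primesLE (2 ^ (k + 1)), (p : ℝ)⁻¹ ≤
      ∑ p ∈ Nat.primesLE (2 ^ k), (p : ℝ)⁻¹ + 4 / k := by
  set Q := Nat.primesLE (2 ^ (k + 1)) \ Nat.primesLE (2 ^ k)
  have hQ : ∀ p ∈ Q, p.Prime ∧ 2 ^ k < p := by
    intro p hp
    simp only [Q, mem_sdiff, Nat.mem_primesLE] at hp
    exact ⟨hp.1.2, lt_of_not_ge fun h => hp.2 ⟨h, hp.1.2⟩⟩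
  have hk0 : (0 : ℝ) < k := by positivity
  have hlog2 : 0 < log 2 := log_pos one_lt_two
  have hcard : (#Q : ℝ) * (k * log 2) ≤ 2 ^ (k + 1) * log 4 := calc
    (#Q : ℝ) * (k * log 2) = ∑ _p ∈ Q, log ((2 : ℕ) ^ k : ℕ) := by simp [mul_comm]
    _ ≤ ∑ p ∈ Q, log p := by
      refine sum_le_sum fun p hp => log_le_log (by positivity) ?_
      exact_mod_cast (hQ p hp).2.le
    _ ≤ ∑ p ∈ Nat.primesLE (2 ^ (k + 1)), log p :=
      sum_le_sum_of_subset_of_nonneg sdiff_subset fun p _ _ => log_natCast_nonneg p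
    _ = θ ((2 ^ (k + 1) : ℕ) : ℝ) := (theta_eq_sum_primesLE_log _).symm
    _ ≤ 2 ^ (k + 1) * log 4 := by
      rw [mul_comm]; exact_mod_cast theta_le_log4_mul_x (by positivity)
  have hQsum : ∑ p ∈ Q, (p : ℝ)⁻¹ ≤ 4 / k := calc
    ∑ p ∈ Q, (p : ℝ)⁻¹ ≤ ∑ _p ∈ Q, ((2 : ℝ) ^ k)⁻¹ := by
      gcongr with p hp
      exact_mod_cast (hQ p hp).2.le
    _ = #Q * (k * log 2) / (k * log 2 * 2 ^ k) := by rw [sum_const, nsmul_eq_mul]; field_simp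
    _ ≤ 2 ^ (k + 1) * log 4 / (k * log 2 * 2 ^ k) := by gcongr
    _ = 4 / k := by
      rw [show (4 : ℝ) = 2 ^ 2 by norm_num, log_pow]; field_simp; ring
  rw [← sum_sdiff (Nat.primesLE_mono (Nat.pow_le_pow_right two_pos k.le_succ))]
  linarith

lemma sum_inv_primesLE_two_pow_le {J : ℕ} (hJ : J ≠ 0) (K : ℕ) :
    ∑ p ∈ Nat.primesLE (2 ^ K), (p : ℝ)⁻¹ ≤
      ∑ p ∈ Nat.primesLE (2 ^ J), (p : ℝ)⁻¹ + 4 * K / J := by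
  induction K with
  | zero =>
    grw [← sum_inv_primesLE_mono (Nat.one_le_two_pow)]
    simp
  | succ K ih =>
    rcases lt_or_ge K J with hKJ | hJK
    · grw [sum_inv_primesLE_mono (Nat.pow_le_pow_right two_pos hKJ)]
      simp only [le_add_iff_nonneg_right]
      positivity
    · have hK : (J : ℝ) ≤ K := by exact_mod_cast hJK
      have : 4 / (K : ℝ) ≤ 4 / J := by gcongr
      grw [sum_inv_primesLE_two_pow_succ_le K (by omega), ih]
      push_cast
      rw [mul_add, add_div]
      linarith

lemma exists_sum_inv_primesLE_le {ε : ℝ} (hε : 0 < ε) :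
    ∃ B, ∀ t : ℝ, 1 ≤ t → ∑ p ∈ Nat.primesLE ⌊t⌋₊, (p : ℝ)⁻¹ ≤ ε * log t + B := by
  have hlog2 : 0 < log 2 := log_pos one_lt_two
  obtain ⟨J, hJ⟩ := exists_nat_gt (4 / (ε * log 2))
  have hJ0 : (0 : ℝ) < J := lt_of_le_of_lt (by positivity) hJ
  have hJε : 4 / J ≤ ε * log 2 := by
    rw [div_lt_iff₀ (by positivity)] at hJ
    rw [div_le_iff₀ hJ0]
    linarith
  refine ⟨∑ p ∈ Nat.primesLE (2 ^ J), (p : ℝ)⁻¹ + 4 / J, fun t ht => ?_⟩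
  set M := ⌊t⌋₊
  set K := Nat.log 2 M
  have hKt : 4 / J * K ≤ ε * log t := calc
    4 / J * K ≤ ε * log 2 * K := by gcongr
    _ ≤ ε * log 2 * logb 2 M := by gcongr; exact_mod_cast natLog_le_logb M 2
    _ = ε * log M := by rw [logb]; field_simp
    _ ≤ ε * log t := by
      gcongr
      exacts [Nat.cast_pos.2 (Nat.floor_pos.2 ht), Nat.floor_le (by linarith)]
  calc ∑ p ∈ Nat.primesLE M, (p : ℝ)⁻¹ ≤ ∑ p ∈ Nat.primesLE (2 ^ (K + 1)), (p : ℝ)⁻¹ :=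
        sum_inv_primesLE_mono (Nat.lt_pow_succ_log_self one_lt_two M).le
    _ ≤ ∑ p ∈ Nat.primesLE (2 ^ J), (p : ℝ)⁻¹ + 4 * ↑(K + 1) / J :=
        sum_inv_primesLE_two_pow_le (Nat.cast_pos.1 hJ0).ne' _
    _ = ∑ p ∈ Nat.primesLE (2 ^ J), (p : ℝ)⁻¹ + 4 / J + 4 / J * K := by push_cast; ring
    _ ≤ _ := by linarith

lemma one_add_pow_card_inter_eq_sum_powerset {ι R : Type*} [CommSemiring R] [DecidableEq ι]
    (A P : Finset ι) (c : R) :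
    (1 + c) ^ #(A ∩ P) = ∑ S ∈ P.powerset, if S ⊆ A then c ^ #S else 0 := by
  rw [← sum_filter, add_comm, ← sum_pow_mul_eq_add_pow]
  simp only [one_pow, mul_one]
  congr 1
  ext S
  simp only [mem_filter, mem_powerset, subset_inter_iff]
  tauto

lemma card_filter_subset_primeFactors_le (S : Finset ℕ) (N : ℕ) :
    (#{n ∈ Ioc 0 N | S ⊆ n.primeFactors} : ℝ) ≤ N / ∏ p ∈ S, (p : ℝ) := calc
  (#{n ∈ Ioc 0 N | S ⊆ n.primeFactors} : ℝ) ≤ #{n ∈ Ioc 0 N | ∏ p ∈ S, p ∣ n} := by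
    refine Nat.cast_le.2 (card_le_card (monotone_filter_right _ fun n _ hS => ?_))
    exact (prod_dvd_prod_of_subset _ _ _ hS).trans n.prod_primeFactors_dvd
  _ = ((N / ∏ p ∈ S, p : ℕ) : ℝ) := by rw [Nat.Ioc_filter_dvd_card_eq_div]
  _ ≤ N / ∏ p ∈ S, (p : ℝ) := by rw [← Nat.cast_prod]; exact Nat.cast_div_le

lemma sum_one_add_pow_card_primeFactors_inter_le (P : Finset ℕ) {c : ℝ} (hc : 0 ≤ c) (N : ℕ) :
    ∑ n ∈ Ioc 0 N, (1 + c) ^ #(n.primeFactors ∩ P) ≤ N * ∏ p ∈ P, (1 + c / p) := calc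
  ∑ n ∈ Ioc 0 N, (1 + c) ^ #(n.primeFactors ∩ P)
      = ∑ S ∈ P.powerset, c ^ #S * #{n ∈ Ioc 0 N | S ⊆ n.primeFactors} := by
    simp_rw [one_add_pow_card_inter_eq_sum_powerset]
    rw [sum_comm]
    refine sum_congr rfl fun S _ => ?_
    rw [← sum_filter, sum_const, nsmul_eq_mul, mul_comm]
  _ ≤ ∑ S ∈ P.powerset, c ^ #S * (N / ∏ p ∈ S, (p : ℝ)) := by
    gcongr; exact card_filter_subset_primeFactors_le _ _
  _ = N * ∏ p ∈ P, (1 + c / p) := by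
    rw [prod_one_add, mul_sum]
    refine sum_congr rfl fun S _ => ?_
    rw [prod_div_distrib, prod_const]; ring

lemma card_filter_le_card_primeFactors_inter_mul_rpow_le (P : Finset ℕ) {c : ℝ} (hc : 0 ≤ c)
    (N : ℕ) (y : ℝ) :
    (#{n ∈ Ioc 0 N | y ≤ #(n.primeFactors ∩ P)} : ℝ) * (1 + c) ^ y ≤
      N * exp (c * ∑ p ∈ P, (p : ℝ)⁻¹) := calc
  (#{n ∈ Ioc 0 N | y ≤ #(n.primeFactors ∩ P)} : ℝ) * (1 + c) ^ y
      = ∑ n ∈ Ioc 0 N with y ≤ #(n.primeFactors ∩ P), (1 + c) ^ y := by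
    rw [sum_const, nsmul_eq_mul]
  _ ≤ ∑ n ∈ Ioc 0 N with y ≤ #(n.primeFactors ∩ P), (1 + c) ^ #(n.primeFactors ∩ P) := by
    refine sum_le_sum fun n hn => ?_
    rw [← rpow_natCast]
    exact rpow_le_rpow_of_exponent_le (by linarith) (mem_filter.1 hn).2
  _ ≤ ∑ n ∈ Ioc 0 N, (1 + c) ^ #(n.primeFactors ∩ P) :=
    sum_le_sum_of_subset_of_nonneg (filter_subset _ _) fun _ _ _ => by positivity
  _ ≤ N * ∏ p ∈ P, (1 + c / p) := sum_one_add_pow_card_primeFactors_inter_le P hc N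
  _ ≤ N * exp (c * ∑ p ∈ P, (p : ℝ)⁻¹) := by
    rw [mul_sum]
    gcongr
    simpa only [div_eq_mul_inv] using prod_one_add_le_exp_sum P fun p => by positivity

lemma primeFactors_filter_le_eq_inter_primesLE (n : ℕ) {t : ℝ} (ht : 0 ≤ t) :
    n.primeFactors.filter (fun p : ℕ => (p : ℝ) ≤ t) = n.primeFactors ∩ Nat.primesLE ⌊t⌋₊ := by
  ext p
  simp only [mem_filter, mem_inter, Nat.mem_primesLE, Nat.le_floor_iff ht]
  exact ⟨fun h => ⟨h.1, h.2, Nat.prime_of_mem_primeFactors h.1⟩, fun h => ⟨h.1, h.2.1⟩⟩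

lemma natCard_setOf_le_card_primeFactors_filter_le {x t : ℝ} (hx : 0 ≤ x) (ht : 0 ≤ t) (y : ℝ) :
    Nat.card {n : ℕ | 1 ≤ n ∧ (n : ℝ) ≤ x ∧
        y ≤ ((n.primeFactors.filter (fun p : ℕ => (p : ℝ) ≤ t)).card : ℝ)} =
      #{n ∈ Ioc 0 ⌊x⌋₊ | y ≤ #(n.primeFactors ∩ Nat.primesLE ⌊t⌋₊)} := by
  rw [← Set.ncard_coe_finset, ← Nat.card_coe_set_eq]
  congr
  ext n
  simp [primeFactors_filter_le_eq_inter_primesLE n ht, Nat.le_floor_iff hx,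
    Nat.one_le_iff_ne_zero, Nat.pos_iff_ne_zero, and_assoc]

/-- Few numbers with many small prime factors: for fixed `C ≥ 1` and `κ > 0`, uniformly in
`x, t ≥ 1`, `#{n ≤ x : #{p prime : p | n, p ≤ t} ≥ κ log t} ≪_{C,κ} x t^{-C}`. -/
theorem few_numbers_with_large_omega (C κ : ℝ) (hC : 1 ≤ C) (hκ : 0 < κ) :
    ∃ K : ℝ, 0 < K ∧ ∀ x t : ℝ, 1 ≤ x → 1 ≤ t →
      (Nat.card {n : ℕ | 1 ≤ n ∧ (n : ℝ) ≤ x ∧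
          κ * Real.log t ≤ ((n.primeFactors.filter (fun p : ℕ => (p : ℝ) ≤ t)).card : ℝ)} : ℝ)
        ≤ K * x * t ^ (-C) := by
  set c := exp ((C + 1) / κ) - 1
  have hc : 0 < c := sub_pos.2 (one_lt_exp_iff.2 (by positivity))
  obtain ⟨B, hB⟩ := exists_sum_inv_primesLE_le (inv_pos.2 hc)
  refine ⟨exp (c * B), exp_pos _, fun x t hx ht => ?_⟩
  have ht0 : 0 < t := by linarith
  have hpow : (1 + c) ^ (κ * log t) = t ^ C * t := by
    rw [add_sub_cancel, ← exp_mul, ← rpow_add_one ht0.ne', rpow_def_of_pos ht0]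
    field_simp
  have hexp : exp (c * ∑ p ∈ Nat.primesLE ⌊t⌋₊, (p : ℝ)⁻¹) ≤ t * exp (c * B) := calc
    _ ≤ exp (c * (c⁻¹ * log t + B)) := by gcongr; exact hB t ht
    _ = t * exp (c * B) := by rw [mul_add, mul_inv_cancel_left₀ hc.ne', exp_add, exp_log ht0]
  have hrankin := card_filter_le_card_primeFactors_inter_mul_rpow_le (Nat.primesLE ⌊t⌋₊) hc.le
    ⌊x⌋₊ (κ * log t)
  rw [natCard_setOf_le_card_primeFactors_filter_le (by linarith) ht0.le, rpow_neg ht0.le,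
    ← div_eq_mul_inv, le_div_iff₀ (by positivity)]
  refine le_of_mul_le_mul_right ?_ ht0
  calc _ = _ * (1 + c) ^ (κ * log t) := by rw [hpow, mul_assoc]
    _ ≤ _ := hrankin
    _ ≤ x * (t * exp (c * B)) := by gcongr; exact Nat.floor_le (by linarith)
    _ = _ := by ring
end

section
/- Let G = (μ,V,W,E,P,f,g) be a GCD graph with edge density δ > 0. Then there is a GCD subgraph G' = (μ,V',W',E',P',f',g') of G with edge density δ' > 0 such that P' ⊆ P ∪ (R(G) ∩ {p : p ≤ C₆}), R(G') ⊆ {p : p > C₆}, and q(G') ≥ q(G)/C₇. -/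
open Finset

/-- A (bipartite) GCD graph: a measure `μ` on `ℕ`, finite vertex sets `V, W` of positive
integers, an edge set `E ⊆ V × W`, a (finite) set of primes `P`, and exponent functions
`f, g` such that for every `p ∈ P`: `p^{f(p)} ∣ v` for all `v ∈ V`, `p^{g(p)} ∣ w` for all
`w ∈ W`, and `p^{min(f(p),g(p))}` exactly divides `gcd(v, w)` for every edge `(v, w)`. -/
structure GCDGraph where
  mu : ℕ → ℝ
  mu_nonneg : ∀ n, 0 ≤ mu n
  V : Finset ℕ
  W : Finset ℕ
  V_pos : ∀ v ∈ V, 0 < v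
  W_pos : ∀ w ∈ W, 0 < w
  E : Finset (ℕ × ℕ)
  E_sub : E ⊆ V ×ˢ W
  P : Finset ℕ
  P_prime : ∀ p ∈ P, p.Prime
  f : ℕ → ℕ
  g : ℕ → ℕ
  f_dvd : ∀ p ∈ P, ∀ v ∈ V, p ^ f p ∣ v
  g_dvd : ∀ p ∈ P, ∀ w ∈ W, p ^ g p ∣ w
  gcd_exact : ∀ p ∈ P, ∀ e ∈ E,
    p ^ min (f p) (g p) ∣ Nat.gcd e.1 e.2 ∧ ¬ p ^ (min (f p) (g p) + 1) ∣ Nat.gcd e.1 e.2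

namespace GCDGraph

/-- The measure of a finite set of integers: `μ(S) = ∑_{n ∈ S} μ(n)`. -/
noncomputable def muSet (mu : ℕ → ℝ) (S : Finset ℕ) : ℝ := ∑ n ∈ S, mu n

/-- The measure of a finite set of pairs: `μ(E) = ∑_{(n₁,n₂) ∈ E} μ(n₁) μ(n₂)`. -/
noncomputable def muEdges (mu : ℕ → ℝ) (E : Finset (ℕ × ℕ)) : ℝ := ∑ e ∈ E, mu e.1 * mu e.2

/-- Edge density `δ = μ(E) / (μ(V) μ(W))` (equal to `0` when `μ(V) μ(W) = 0`,
by the Lean convention `x / 0 = 0`). -/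
noncomputable def densityRaw (mu : ℕ → ℝ) (V W : Finset ℕ) (E : Finset (ℕ × ℕ)) : ℝ :=
  muEdges mu E / (muSet mu V * muSet mu W)

/-- The quality
`q = δ^{2+τ} μ(V) μ(W) ∏_{p ∈ P} p^{|f(p)-g(p)|} (1 - 1_{f(p)=g(p)≥1}/p)^{-2} (1 - p^{-1-τ/4})^{-3}`. -/
noncomputable def qualityRaw (τ : ℝ) (mu : ℕ → ℝ) (V W : Finset ℕ) (E : Finset (ℕ × ℕ))
    (P : Finset ℕ) (f g : ℕ → ℕ) : ℝ :=
  densityRaw mu V W E ^ (2 + τ) * muSet mu V * muSet mu W *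
    ∏ p ∈ P, ((p : ℝ) ^ (((f p : ℤ) - (g p : ℤ)).natAbs) *
      ((1 - (if f p = g p ∧ 1 ≤ f p then ((p : ℝ))⁻¹ else 0))⁻¹) ^ 2 *
      ((1 - (p : ℝ) ^ (-1 - τ / 4))⁻¹) ^ 3)

/-- The edge density of a GCD graph. -/
noncomputable def density (G : GCDGraph) : ℝ := densityRaw G.mu G.V G.W G.E

/-- The quality of a GCD graph (with parameter `τ`). -/
noncomputable def quality (τ : ℝ) (G : GCDGraph) : ℝ :=
  qualityRaw τ G.mu G.V G.W G.E G.P G.f G.g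

/-- `G'` is a GCD subgraph of `G`. -/
def IsSubgraph (G' G : GCDGraph) : Prop :=
  G'.mu = G.mu ∧ G'.V ⊆ G.V ∧ G'.W ⊆ G.W ∧ G'.E ⊆ G.E ∧ G.P ⊆ G'.P ∧
    (∀ p ∈ G.P, G'.f p = G.f p) ∧ (∀ p ∈ G.P, G'.g p = G.g p)

/-- `G` is `(P,f,g)`-maximal: every GCD subgraph with the same multiplicative data has
quality at most `q(G)`. -/
def IsMaximal (τ : ℝ) (G : GCDGraph) : Prop :=
  ∀ G' : GCDGraph, IsSubgraph G' G → G'.P = G.P → quality τ G' ≤ quality τ G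

/-- `R(G)`: the set of primes `p ∉ P` dividing `gcd(v,w)` for some edge `(v,w)`. -/
def R (G : GCDGraph) : Set ℕ :=
  {p | p.Prime ∧ p ∉ G.P ∧ ∃ e ∈ G.E, p ∣ Nat.gcd e.1 e.2}

/-- `S_{p^k}`: the subset of elements of `S` exactly divisible by `p^k`. -/
def exactPart (S : Finset ℕ) (p k : ℕ) : Finset ℕ :=
  S.filter fun v => p ^ k ∣ v ∧ ¬ p ^ (k + 1) ∣ v

/-- `E_{p^k, p^ℓ} = E ∩ (V_{p^k} × W_{p^ℓ})`. -/
def edgesAt (G : GCDGraph) (p k l : ℕ) : Finset (ℕ × ℕ) :=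
  G.E.filter fun e => e.1 ∈ exactPart G.V p k ∧ e.2 ∈ exactPart G.W p l

/-- The quality of the GCD subgraph `G_{p^k, p^ℓ}`, with vertex sets `V_{p^k}`, `W_{p^ℓ}`,
edges `E_{p^k,p^ℓ}`, prime set `P ∪ {p}` and `f, g` extended by `f(p) = k`, `g(p) = ℓ`. -/
noncomputable def qualityAt (τ : ℝ) (G : GCDGraph) (p k l : ℕ) : ℝ :=
  qualityRaw τ G.mu (exactPart G.V p k) (exactPart G.W p l) (edgesAt G p k l)
    (insert p G.P) (Function.update G.f p k) (Function.update G.g p l)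

noncomputable def C1 (τ : ℝ) : ℝ := 10 ^ 4 / τ
noncomputable def C2 (τ M : ℝ) : ℝ := 10 * M * C1 τ ^ 3
noncomputable def C3 (τ : ℝ) : ℝ := 10 ^ 3 * C1 τ ^ 3
noncomputable def C4 (τ M : ℝ) : ℝ := 10 ^ 10 * M ^ 2 * C2 τ M ^ 2
noncomputable def C5 (τ M : ℝ) : ℝ := max (C3 τ) ((50 * Real.log (C4 τ M)) ^ 3)
noncomputable def C6 (τ M : ℝ) : ℝ :=
  max (C4 τ M) (max (10 ^ 4 * M * C2 τ M) (C2 τ M ^ (10 / τ)))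
noncomputable def C7 (τ M : ℝ) : ℝ := C5 τ M ^ C6 τ M

/-- `R♯(G)`: those `p ∈ R(G)` admitting `k ≥ 0` with `μ(V_{p^k})/μ(V) ≥ 1 − C₂/p` and
`μ(W_{p^k})/μ(W) ≥ 1 − C₂/p`, and such that `q(G_{p^a,p^b}) < M q(G)` for all `a ≠ b`. -/
def Rsharp (τ M : ℝ) (G : GCDGraph) : Set ℕ :=
  {p ∈ R G |
    (∃ k : ℕ, 1 - C2 τ M / (p : ℝ) ≤ muSet G.mu (exactPart G.V p k) / muSet G.mu G.V ∧
        1 - C2 τ M / (p : ℝ) ≤ muSet G.mu (exactPart G.W p k) / muSet G.mu G.W) ∧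
    ∀ a b : ℕ, a ≠ b → qualityAt τ G p a b < M * quality τ G}

/-- `R♭(G) = R(G) \ R♯(G)`. -/
def Rflat (τ M : ℝ) (G : GCDGraph) : Set ℕ := R G \ Rsharp τ M G

/-- The neighbourhood `Γ_G(v) = {w ∈ W : (v,w) ∈ E}` of a left vertex. -/
def nbhdOfV (G : GCDGraph) (v : ℕ) : Finset ℕ := G.W.filter fun w => (v, w) ∈ G.E

/-- The neighbourhood `Γ_G(w) = {v ∈ V : (v,w) ∈ E}` of a right vertex. -/
def nbhdOfW (G : GCDGraph) (w : ℕ) : Finset ℕ := G.V.filter fun v => (v, w) ∈ G.E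

end GCDGraph

open GCDGraph

/-!
For a prime `p ∈ R(G)`, split `V` and `W` according to the exact power of `p` dividing each
vertex. The relative measures `a_k`, `b_l` of the vertex pieces and `x_{kl}` of the edge pieces
each sum to `1`, and `∑_l (4/5)^{|k-l|} ≤ 9`, so some pair has
`(a_k + b_l) (4/5)^{|k-l|} < 20 x_{kl}`. Since `√(a_k b_l) ≤ (a_k + b_l)/2` and the new factor
`p^{|k-l|} ≥ 2^{|k-l|}` enters the quality, the subgraph `G_{p^k,p^l}` has quality at least
`q(G)/1000`. Primes only leave `R` when passing to subgraphs, and the prime just added to `P`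
leaves it, so doing this for each prime of `R(G)` up to `C₆` costs at most
`1000^{⌊C₆⌋} ≤ C₅^{C₆} = C₇`.
-/

lemma sum_range_pow_natAbs_sub_le {r : ℝ} (hr0 : 0 ≤ r) (hr1 : r < 1) (k N : ℕ) :
    ∑ l ∈ range N, r ^ ((k : ℤ) - l).natAbs ≤ (1 + r) / (1 - r) := by
  have hgeom : ∀ n, ∑ j ∈ range n, r ^ j ≤ 1 / (1 - r) := fun n => by
    have := geom_sum_Ico_le_of_lt_one (m := 0) (n := n) hr0 hr1
    rwa [← range_eq_Ico, pow_zero] at this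
  have hleft : ∑ l ∈ range (k + 1), r ^ ((k : ℤ) - l).natAbs = ∑ j ∈ range (k + 1), r ^ j := by
    rw [← sum_range_reflect]
    refine sum_congr rfl fun j hj => ?_
    have := mem_range.1 hj
    congr 1
    omega
  have hright : ∑ j ∈ range N, r ^ ((k : ℤ) - (k + 1 + j : ℕ)).natAbs
      = r * ∑ j ∈ range N, r ^ j := by
    rw [mul_sum]
    refine sum_congr rfl fun j _ => ?_
    rw [← pow_succ']
    congr 1
    omega
  calc ∑ l ∈ range N, r ^ ((k : ℤ) - l).natAbs
      ≤ ∑ l ∈ range (k + 1 + N), r ^ ((k : ℤ) - l).natAbs :=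
        sum_le_sum_of_subset_of_nonneg (range_subset_range.2 (by omega))
          fun _ _ _ => by positivity
    _ = ∑ j ∈ range (k + 1), r ^ j + r * ∑ j ∈ range N, r ^ j := by
        rw [sum_range_add, hleft, hright]
    _ ≤ 1 / (1 - r) + r * (1 / (1 - r)) := by gcongr <;> exact hgeom _
    _ = (1 + r) / (1 - r) := by ring

/-- The weight `(4/5)^{|k-l|}` is chosen so that `(4/5)^{3|k-l|} 2^{|k-l|} ≥ 1`: after raising to
the power `2 + τ ≤ 3` it is paid for by the factor `p^{|k-l|}` of the quality. -/
lemma exists_add_mul_pow_natAbs_lt (N : ℕ) (x : ℕ × ℕ → ℝ) (a b : ℕ → ℝ)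
    (ha : ∀ k, 0 ≤ a k) (hb : ∀ l, 0 ≤ b l) (hx : ∑ q ∈ range N ×ˢ range N, x q = 1)
    (ha1 : ∑ k ∈ range N, a k = 1) (hb1 : ∑ l ∈ range N, b l = 1) :
    ∃ k l, (a k + b l) * (4 / 5 : ℝ) ^ ((k : ℤ) - l).natAbs < 20 * x (k, l) := by
  have hrow (k : ℕ) : ∑ l ∈ range N, (4 / 5 : ℝ) ^ ((k : ℤ) - l).natAbs ≤ 9 :=
    (sum_range_pow_natAbs_sub_le (by norm_num) (by norm_num) k N).trans_eq (by norm_num)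
  have hsum : ∑ q ∈ range N ×ˢ range N, (a q.1 + b q.2) * (4 / 5 : ℝ) ^ ((q.1 : ℤ) - q.2).natAbs
      < ∑ q ∈ range N ×ˢ range N, 20 * x q := by
    rw [← mul_sum, hx, sum_product]
    calc ∑ k ∈ range N, ∑ l ∈ range N, (a k + b l) * (4 / 5 : ℝ) ^ ((k : ℤ) - l).natAbs
        = ∑ k ∈ range N, a k * ∑ l ∈ range N, (4 / 5 : ℝ) ^ ((k : ℤ) - l).natAbs
          + ∑ l ∈ range N, b l * ∑ k ∈ range N, (4 / 5 : ℝ) ^ ((l : ℤ) - k).natAbs := by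
          simp only [add_mul, sum_add_distrib, mul_sum]
          rw [sum_comm (f := fun k l => b l * _)]
          congr 1
          refine sum_congr rfl fun l _ => sum_congr rfl fun k _ => ?_
          congr 2
          omega
      _ ≤ ∑ k ∈ range N, a k * 9 + ∑ l ∈ range N, b l * 9 := by
          gcongr with k _ l _
          · exact ha k
          · exact hrow k
          · exact hb l
          · exact hrow l
      _ < 20 * 1 := by rw [← sum_mul, ← sum_mul, ha1, hb1]; norm_num
  obtain ⟨q, -, hq⟩ := exists_lt_of_sum_lt hsum
  exact ⟨q.1, q.2, hq⟩

lemma rpow_le_of_add_mul_lt {τ a b x : ℝ} (hτ0 : 0 ≤ τ) (hτ1 : τ ≤ 1) (ha : 0 ≤ a) (hb : 0 ≤ b)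
    (hab : a * b ≤ 1) (d : ℕ) (h : (a + b) * (4 / 5 : ℝ) ^ d < 20 * x) :
    (a * b) ^ (1 + τ) ≤ 1000 * 2 ^ d * x ^ (2 + τ) := by
  set m := (a + b) / 2
  set ρ : ℝ := (4 / 5) ^ d
  have hρ0 : 0 < ρ := by positivity
  have hρ1 : ρ ≤ 1 := pow_le_one₀ (by norm_num) (by norm_num)
  have hm0 : 0 ≤ m := by positivity
  have hmx : m * ρ ≤ 10 * x := by
    have : m * ρ = (a + b) * ρ / 2 := by ring
    linarith
  have hρ3 : 1 ≤ ρ ^ 3 * 2 ^ d := by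
    rw [← pow_mul, pow_mul', ← mul_pow]
    exact one_le_pow₀ (by norm_num)
  have hab_m : (a * b) ^ (1 + τ) ≤ m ^ (2 + τ) := calc
    (a * b) ^ (1 + τ) ≤ (a * b) ^ (1 + τ / 2) :=
      Real.rpow_le_rpow_of_exponent_ge' (by positivity) hab (by positivity) (by linarith)
    _ ≤ (m ^ 2) ^ (1 + τ / 2) := by gcongr; simp only [m]; nlinarith [sq_nonneg (a - b)]
    _ = m ^ (2 + τ) := by
      rw [← Real.rpow_natCast_mul hm0]
      ring_nf
  have hρ_exp : ρ ^ 3 ≤ ρ ^ (2 + τ) := by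
    rw [← Real.rpow_natCast]
    exact Real.rpow_le_rpow_of_exponent_ge hρ0 hρ1 (by push_cast; linarith)
  have h10 : (10 : ℝ) ^ (2 + τ) ≤ 1000 := by
    calc (10 : ℝ) ^ (2 + τ) ≤ 10 ^ (3 : ℝ) :=
          Real.rpow_le_rpow_of_exponent_le (by norm_num) (by linarith)
      _ = 1000 := by norm_num
  have hx0 : 0 ≤ x := by nlinarith
  calc (a * b) ^ (1 + τ) ≤ (a * b) ^ (1 + τ) * (ρ ^ 3 * 2 ^ d) :=
        le_mul_of_one_le_right (by positivity) hρ3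
    _ ≤ m ^ (2 + τ) * (ρ ^ (2 + τ) * 2 ^ d) := by gcongr
    _ = (m * ρ) ^ (2 + τ) * 2 ^ d := by rw [Real.mul_rpow hm0 hρ0.le]; ring
    _ ≤ (10 * x) ^ (2 + τ) * 2 ^ d := by gcongr
    _ = 10 ^ (2 + τ) * 2 ^ d * x ^ (2 + τ) := by rw [Real.mul_rpow (by norm_num) hx0]; ring
    _ ≤ 1000 * 2 ^ d * x ^ (2 + τ) := by gcongr

lemma div_rpow_mul_eq {τ e c : ℝ} (he : 0 ≤ e) (hc : 0 < c) :
    (e / c) ^ (2 + τ) * c = e ^ (2 + τ) / c ^ (1 + τ) := by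
  rw [Real.div_rpow he hc.le, show 2 + τ = (1 + τ) + 1 by ring, Real.rpow_add_one hc.ne']
  have : c ^ (1 + τ) ≠ 0 := (Real.rpow_pos_of_pos hc _).ne'
  field_simp

lemma rpow_div_rpow_le_of_ratio {τ K e c e' c' : ℝ} (he : 0 < e) (hc : 0 < c) (he' : 0 ≤ e')
    (hc' : 0 < c') (h : (c' / c) ^ (1 + τ) ≤ K * (e' / e) ^ (2 + τ)) :
    e ^ (2 + τ) / c ^ (1 + τ) ≤ K * (e' ^ (2 + τ) / c' ^ (1 + τ)) := by
  rw [Real.div_rpow hc'.le hc.le, Real.div_rpow he' he.le] at h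
  have hE := Real.rpow_pos_of_pos he (2 + τ)
  have hC := Real.rpow_pos_of_pos hc (1 + τ)
  have hC' := Real.rpow_pos_of_pos hc' (1 + τ)
  rw [div_le_iff₀ hC, mul_div_assoc', div_mul_eq_mul_div, le_div_iff₀ hC']
  rw [div_le_iff₀ hC, mul_div_assoc', div_mul_eq_mul_div, le_div_iff₀ hE] at h
  linarith

namespace GCDGraph

lemma muSet_nonneg {mu : ℕ → ℝ} (hmu : ∀ n, 0 ≤ mu n) (S : Finset ℕ) : 0 ≤ muSet mu S :=
  sum_nonneg fun n _ => hmu n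

lemma muSet_mono {mu : ℕ → ℝ} (hmu : ∀ n, 0 ≤ mu n) {S T : Finset ℕ} (h : S ⊆ T) :
    muSet mu S ≤ muSet mu T :=
  sum_le_sum_of_subset_of_nonneg h fun n _ _ => hmu n

lemma muEdges_nonneg {mu : ℕ → ℝ} (hmu : ∀ n, 0 ≤ mu n) (E : Finset (ℕ × ℕ)) :
    0 ≤ muEdges mu E :=
  sum_nonneg fun e _ => mul_nonneg (hmu e.1) (hmu e.2)

lemma muEdges_le_mul_muSet {mu : ℕ → ℝ} (hmu : ∀ n, 0 ≤ mu n) {E : Finset (ℕ × ℕ)}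
    {V W : Finset ℕ} (h : E ⊆ V ×ˢ W) : muEdges mu E ≤ muSet mu V * muSet mu W := by
  rw [muSet, muSet, sum_mul_sum, ← sum_product']
  exact sum_le_sum_of_subset_of_nonneg h fun e _ _ => mul_nonneg (hmu e.1) (hmu e.2)

lemma density_pos_iff (G : GCDGraph) : 0 < G.density ↔ 0 < muEdges G.mu G.E := by
  have hE := muEdges_le_mul_muSet G.mu_nonneg G.E_sub
  refine ⟨fun h => ?_, fun h => div_pos h (h.trans_le hE)⟩
  refine (muEdges_nonneg G.mu_nonneg G.E).lt_of_ne fun h0 => ?_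
  simp [density, densityRaw, ← h0] at h

noncomputable def qualityFactor (τ : ℝ) (f g : ℕ → ℕ) (p : ℕ) : ℝ :=
  (p : ℝ) ^ (((f p : ℤ) - (g p : ℤ)).natAbs) *
    ((1 - (if f p = g p ∧ 1 ≤ f p then ((p : ℝ))⁻¹ else 0))⁻¹) ^ 2 *
    ((1 - (p : ℝ) ^ (-1 - τ / 4))⁻¹) ^ 3

lemma qualityRaw_eq_mul_prod (τ : ℝ) (mu : ℕ → ℝ) (V W : Finset ℕ) (E : Finset (ℕ × ℕ))
    (P : Finset ℕ) (f g : ℕ → ℕ) :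
    qualityRaw τ mu V W E P f g =
      densityRaw mu V W E ^ (2 + τ) * muSet mu V * muSet mu W * ∏ p ∈ P, qualityFactor τ f g p :=
  rfl

lemma qualityFactor_congr {τ : ℝ} {f g f' g' : ℕ → ℕ} {p : ℕ} (hf : f' p = f p)
    (hg : g' p = g p) : qualityFactor τ f' g' p = qualityFactor τ f g p := by
  rw [qualityFactor, qualityFactor, hf, hg]

lemma one_le_inv_one_sub {t : ℝ} (h0 : 0 ≤ t) (h1 : t < 1) : 1 ≤ (1 - t)⁻¹ :=
  (one_le_inv₀ (by linarith)).2 (by linarith)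

lemma two_pow_le_qualityFactor {τ : ℝ} (hτ : 0 ≤ τ) {p : ℕ} (hp : p.Prime) (f g : ℕ → ℕ) :
    (2 : ℝ) ^ ((f p : ℤ) - g p).natAbs ≤ qualityFactor τ f g p := by
  have hp2 : (2 : ℝ) ≤ p := by exact_mod_cast hp.two_le
  have hind : 1 ≤ (1 - (if f p = g p ∧ 1 ≤ f p then ((p : ℝ))⁻¹ else 0))⁻¹ := by
    split_ifs
    · exact one_le_inv_one_sub (by positivity) (inv_lt_one_of_one_lt₀ (by linarith))
    · simp
  have hzeta : 1 ≤ (1 - (p : ℝ) ^ (-1 - τ / 4))⁻¹ :=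
    one_le_inv_one_sub (by positivity)
      (Real.rpow_lt_one_of_one_lt_of_neg (by linarith) (by linarith))
  calc (2 : ℝ) ^ ((f p : ℤ) - g p).natAbs ≤ (p : ℝ) ^ ((f p : ℤ) - g p).natAbs * 1 * 1 := by
        rw [mul_one, mul_one]; gcongr
    _ ≤ qualityFactor τ f g p := by
        unfold qualityFactor; gcongr <;> exact one_le_pow₀ ‹_›

lemma qualityFactor_pos {τ : ℝ} (hτ : 0 ≤ τ) {p : ℕ} (hp : p.Prime) (f g : ℕ → ℕ) :
    0 < qualityFactor τ f g p :=
  (by positivity : (0 : ℝ) < 2 ^ _).trans_le (two_pow_le_qualityFactor hτ hp f g)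

lemma quality_nonneg {τ : ℝ} (hτ : 0 ≤ τ) (G : GCDGraph) : 0 ≤ quality τ G := by
  have hd : 0 ≤ G.density :=
    div_nonneg (muEdges_nonneg G.mu_nonneg _)
      (mul_nonneg (muSet_nonneg G.mu_nonneg _) (muSet_nonneg G.mu_nonneg _))
  rw [quality, qualityRaw_eq_mul_prod]
  exact mul_nonneg (mul_nonneg (mul_nonneg (Real.rpow_nonneg hd _) (muSet_nonneg G.mu_nonneg _))
    (muSet_nonneg G.mu_nonneg _))
    (prod_pos fun p hp => qualityFactor_pos hτ (G.P_prime p hp) G.f G.g).le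

lemma IsSubgraph.refl (G : GCDGraph) : IsSubgraph G G :=
  ⟨rfl, subset_rfl, subset_rfl, subset_rfl, subset_rfl, fun _ _ => rfl, fun _ _ => rfl⟩

lemma IsSubgraph.trans {G₂ G₁ G : GCDGraph} (h₂ : IsSubgraph G₂ G₁) (h₁ : IsSubgraph G₁ G) :
    IsSubgraph G₂ G := by
  obtain ⟨hmu₂, hV₂, hW₂, hE₂, hP₂, hf₂, hg₂⟩ := h₂
  obtain ⟨hmu₁, hV₁, hW₁, hE₁, hP₁, hf₁, hg₁⟩ := h₁
  exact ⟨hmu₂.trans hmu₁, hV₂.trans hV₁, hW₂.trans hW₁, hE₂.trans hE₁, hP₁.trans hP₂,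
    fun p hp => (hf₂ p (hP₁ hp)).trans (hf₁ p hp), fun p hp => (hg₂ p (hP₁ hp)).trans (hg₁ p hp)⟩

lemma IsSubgraph.R_subset {G₁ G : GCDGraph} (h : IsSubgraph G₁ G) : R G₁ ⊆ R G := by
  obtain ⟨-, -, -, hE, hP, -, -⟩ := h
  rintro p ⟨hp, hpP, e, he, hdvd⟩
  exact ⟨hp, fun hmem => hpP (hP hmem), e, hE he, hdvd⟩

lemma pow_min_dvd_gcd_and_not_dvd {p k l v w : ℕ} (hv : p ^ k ∣ v ∧ ¬ p ^ (k + 1) ∣ v)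
    (hw : p ^ l ∣ w ∧ ¬ p ^ (l + 1) ∣ w) :
    p ^ min k l ∣ Nat.gcd v w ∧ ¬ p ^ (min k l + 1) ∣ Nat.gcd v w := by
  refine ⟨Nat.dvd_gcd ((pow_dvd_pow p (min_le_left k l)).trans hv.1)
    ((pow_dvd_pow p (min_le_right k l)).trans hw.1), fun hdvd => ?_⟩
  rcases le_total k l with hkl | hlk
  · rw [min_eq_left hkl] at hdvd
    exact hv.2 (hdvd.trans (Nat.gcd_dvd_left v w))
  · rw [min_eq_right hlk] at hdvd
    exact hw.2 (hdvd.trans (Nat.gcd_dvd_right v w))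

lemma edgesAt_subset (G : GCDGraph) (p k l : ℕ) :
    edgesAt G p k l ⊆ exactPart G.V p k ×ˢ exactPart G.W p l :=
  fun _ he => mem_product.2 (mem_filter.1 he).2

/-- The paper's `G_{p^k, p^ℓ}`. -/
def subgraphAt (G : GCDGraph) {p : ℕ} (hp : p.Prime) (k l : ℕ) : GCDGraph where
  mu := G.mu
  mu_nonneg := G.mu_nonneg
  V := exactPart G.V p k
  W := exactPart G.W p l
  V_pos v hv := G.V_pos v (mem_filter.1 hv).1
  W_pos w hw := G.W_pos w (mem_filter.1 hw).1
  E := edgesAt G p k l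
  E_sub := edgesAt_subset G p k l
  P := insert p G.P
  P_prime q hq := (mem_insert.1 hq).elim (· ▸ hp) (G.P_prime q)
  f := Function.update G.f p k
  g := Function.update G.g p l
  f_dvd q hq v hv := by
    obtain rfl | hqp := eq_or_ne q p
    · simpa using (mem_filter.1 hv).2.1
    · rw [Function.update_of_ne hqp]
      exact G.f_dvd q ((mem_insert.1 hq).resolve_left hqp) v (mem_filter.1 hv).1
  g_dvd q hq w hw := by
    obtain rfl | hqp := eq_or_ne q p
    · simpa using (mem_filter.1 hw).2.1
    · rw [Function.update_of_ne hqp]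
      exact G.g_dvd q ((mem_insert.1 hq).resolve_left hqp) w (mem_filter.1 hw).1
  gcd_exact q hq e he := by
    obtain ⟨heE, hv, hw⟩ := mem_filter.1 he
    obtain rfl | hqp := eq_or_ne q p
    · simpa using pow_min_dvd_gcd_and_not_dvd (mem_filter.1 hv).2 (mem_filter.1 hw).2
    · rw [Function.update_of_ne hqp, Function.update_of_ne hqp]
      exact G.gcd_exact q ((mem_insert.1 hq).resolve_left hqp) e heE

lemma isSubgraph_subgraphAt (G : GCDGraph) {p : ℕ} (hp : p.Prime) (hpP : p ∉ G.P) (k l : ℕ) :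
    IsSubgraph (G.subgraphAt hp k l) G :=
  ⟨rfl, filter_subset _ _, filter_subset _ _, filter_subset _ _, subset_insert _ _,
    fun _ hq => Function.update_of_ne (ne_of_mem_of_not_mem hq hpP) _ _,
    fun _ hq => Function.update_of_ne (ne_of_mem_of_not_mem hq hpP) _ _⟩

lemma quality_subgraphAt (τ : ℝ) (G : GCDGraph) {p : ℕ} (hp : p.Prime) (k l : ℕ) :
    quality τ (G.subgraphAt hp k l) = qualityAt τ G p k l :=
  rfl

lemma exactPart_eq_filter {S : Finset ℕ} (hS : ∀ v ∈ S, 0 < v) {p : ℕ} (hp : p.Prime) (k : ℕ) :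
    exactPart S p k = S.filter fun v => v.factorization p = k := by
  refine filter_congr fun v hv => ?_
  rw [hp.pow_dvd_iff_le_factorization (hS v hv).ne',
    hp.pow_dvd_iff_le_factorization (hS v hv).ne']
  omega

lemma sum_muSet_exactPart (mu : ℕ → ℝ) {S : Finset ℕ} (hS : ∀ v ∈ S, 0 < v) {p N : ℕ}
    (hp : p.Prime) (hN : ∀ v ∈ S, v < N) :
    ∑ k ∈ range N, muSet mu (exactPart S p k) = muSet mu S := by
  simp only [muSet, exactPart_eq_filter hS hp]
  exact sum_fiberwise_of_maps_to
    (fun v hv => mem_range.2 ((Nat.factorization_lt p (hS v hv).ne').trans (hN v hv))) mu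

lemma sum_muEdges_edgesAt (G : GCDGraph) {p N : ℕ} (hp : p.Prime) (hV : ∀ v ∈ G.V, v < N)
    (hW : ∀ w ∈ G.W, w < N) :
    ∑ q ∈ range N ×ˢ range N, muEdges G.mu (edgesAt G p q.1 q.2) = muEdges G.mu G.E := by
  have hval (e) (he : e ∈ G.E) :
      (e.1.factorization p, e.2.factorization p) ∈ range N ×ˢ range N := by
    obtain ⟨hv, hw⟩ := mem_product.1 (G.E_sub he)
    exact mem_product.2 ⟨mem_range.2 ((Nat.factorization_lt p (G.V_pos _ hv).ne').trans (hV _ hv)),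
      mem_range.2 ((Nat.factorization_lt p (G.W_pos _ hw).ne').trans (hW _ hw))⟩
  rw [muEdges, ← sum_fiberwise_of_maps_to hval]
  refine sum_congr rfl fun q _ => congrArg (muEdges G.mu) (filter_congr fun e he => ?_)
  obtain ⟨hv, hw⟩ := mem_product.1 (G.E_sub he)
  simp [exactPart_eq_filter G.V_pos hp, exactPart_eq_filter G.W_pos hp, hv, hw, Prod.ext_iff]

lemma qualityRaw_eq_of_pos (τ : ℝ) {mu : ℕ → ℝ} {V W : Finset ℕ} {E : Finset (ℕ × ℕ)}
    (P : Finset ℕ) (f g : ℕ → ℕ) (hE : 0 ≤ muEdges mu E) (hVW : 0 < muSet mu V * muSet mu W) :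
    qualityRaw τ mu V W E P f g = muEdges mu E ^ (2 + τ) / (muSet mu V * muSet mu W) ^ (1 + τ) *
      ∏ p ∈ P, qualityFactor τ f g p := by
  rw [qualityRaw_eq_mul_prod, mul_assoc (densityRaw _ _ _ _ ^ _), densityRaw,
    div_rpow_mul_eq hE hVW]

lemma prod_qualityFactor_insert {τ : ℝ} {P : Finset ℕ} {p : ℕ} (hpP : p ∉ P) (f g : ℕ → ℕ)
    (k l : ℕ) :
    ∏ q ∈ insert p P, qualityFactor τ (Function.update f p k) (Function.update g p l) q =
      qualityFactor τ (Function.update f p k) (Function.update g p l) p *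
        ∏ q ∈ P, qualityFactor τ f g q := by
  rw [prod_insert hpP]
  congr 1
  refine prod_congr rfl fun q hq => qualityFactor_congr ?_ ?_ <;>
    exact Function.update_of_ne (ne_of_mem_of_not_mem hq hpP) _ _

lemma exists_weight_lt_edgesAt {G : GCDGraph} (hδ : 0 < G.density) {p : ℕ} (hp : p.Prime) :
    ∃ k l, (muSet G.mu (exactPart G.V p k) / muSet G.mu G.V +
        muSet G.mu (exactPart G.W p l) / muSet G.mu G.W) * (4 / 5 : ℝ) ^ ((k : ℤ) - l).natAbs <
      20 * (muEdges G.mu (edgesAt G p k l) / muEdges G.mu G.E) := by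
  have hmu := G.mu_nonneg
  have he := (density_pos_iff G).1 hδ
  have hAB := he.trans_le (muEdges_le_mul_muSet hmu G.E_sub)
  have hA := pos_of_mul_pos_left hAB (muSet_nonneg hmu _)
  have hB := pos_of_mul_pos_right hAB (muSet_nonneg hmu _)
  set N := (G.V ∪ G.W).sup id + 1
  have hN (v) (hv : v ∈ G.V ∪ G.W) : v < N := Nat.lt_succ_of_le (le_sup (f := id) hv)
  have hV (v) (hv : v ∈ G.V) : v < N := hN v (mem_union_left _ hv)
  have hW (w) (hw : w ∈ G.W) : w < N := hN w (mem_union_right _ hw)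
  exact exists_add_mul_pow_natAbs_lt N _ _ _
    (fun k => div_nonneg (muSet_nonneg hmu _) hA.le)
    (fun l => div_nonneg (muSet_nonneg hmu _) hB.le)
    (by rw [← sum_div, sum_muEdges_edgesAt G hp hV hW, div_self he.ne'])
    (by rw [← sum_div, sum_muSet_exactPart _ G.V_pos hp hV, div_self hA.ne'])
    (by rw [← sum_div, sum_muSet_exactPart _ G.W_pos hp hW, div_self hB.ne'])

lemma quality_le_qualityAt_of_weight_lt {τ : ℝ} (hτ0 : 0 ≤ τ) (hτ1 : τ ≤ 1) {G : GCDGraph}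
    (hδ : 0 < G.density) {p : ℕ} (hp : p.Prime) (hpP : p ∉ G.P) {k l : ℕ}
    (hkl : (muSet G.mu (exactPart G.V p k) / muSet G.mu G.V +
        muSet G.mu (exactPart G.W p l) / muSet G.mu G.W) * (4 / 5 : ℝ) ^ ((k : ℤ) - l).natAbs <
      20 * (muEdges G.mu (edgesAt G p k l) / muEdges G.mu G.E)) :
    0 < muEdges G.mu (edgesAt G p k l) ∧ quality τ G ≤ 1000 * qualityAt τ G p k l := by
  have hmu := G.mu_nonneg
  set A := muSet G.mu G.V
  set B := muSet G.mu G.W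
  set e := muEdges G.mu G.E
  set Ak := muSet G.mu (exactPart G.V p k)
  set Bl := muSet G.mu (exactPart G.W p l)
  set ekl := muEdges G.mu (edgesAt G p k l)
  set d := ((k : ℤ) - l).natAbs
  have he : 0 < e := (density_pos_iff G).1 hδ
  have hAB : 0 < A * B := he.trans_le (muEdges_le_mul_muSet hmu G.E_sub)
  have ha : 0 ≤ Ak / A := div_nonneg (muSet_nonneg hmu _) (muSet_nonneg hmu _)
  have hb : 0 ≤ Bl / B := div_nonneg (muSet_nonneg hmu _) (muSet_nonneg hmu _)
  have hekl : 0 < ekl := by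
    have hρ : (0 : ℝ) ≤ (4 / 5) ^ d := by positivity
    exact (div_pos_iff_of_pos_right he).1 (by nlinarith)
  have hAkBl : 0 < Ak * Bl := hekl.trans_le (muEdges_le_mul_muSet hmu (edgesAt_subset G p k l))
  have hratio := rpow_le_of_add_mul_lt hτ0 hτ1 ha hb
    (mul_le_one₀ (div_le_one_of_le₀ (muSet_mono hmu (filter_subset _ _)) (muSet_nonneg hmu _)) hb
      (div_le_one_of_le₀ (muSet_mono hmu (filter_subset _ _)) (muSet_nonneg hmu _))) d hkl
  rw [div_mul_div_comm] at hratio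
  have hcore := rpow_div_rpow_le_of_ratio he hAB hekl.le hAkBl hratio
  have hF := two_pow_le_qualityFactor hτ0 hp (Function.update G.f p k) (Function.update G.g p l)
  simp only [Function.update_self] at hF
  have hprod := prod_pos fun q hq => qualityFactor_pos (τ := τ) hτ0 (G.P_prime q hq) G.f G.g
  refine ⟨hekl, ?_⟩
  rw [quality, qualityAt, qualityRaw_eq_of_pos _ _ _ _ he.le hAB,
    qualityRaw_eq_of_pos _ _ _ _ hekl.le hAkBl, prod_qualityFactor_insert hpP]
  calc e ^ (2 + τ) / (A * B) ^ (1 + τ) * ∏ q ∈ G.P, qualityFactor τ G.f G.g q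
      ≤ 1000 * 2 ^ d * (ekl ^ (2 + τ) / (Ak * Bl) ^ (1 + τ)) *
          ∏ q ∈ G.P, qualityFactor τ G.f G.g q := by gcongr
    _ = 1000 * (ekl ^ (2 + τ) / (Ak * Bl) ^ (1 + τ) *
          (2 ^ d * ∏ q ∈ G.P, qualityFactor τ G.f G.g q)) := by ring
    _ ≤ _ := by gcongr

lemma exists_quality_le_qualityAt {τ : ℝ} (hτ0 : 0 ≤ τ) (hτ1 : τ ≤ 1) {G : GCDGraph}
    (hδ : 0 < G.density) {p : ℕ} (hp : p.Prime) (hpP : p ∉ G.P) :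
    ∃ k l, 0 < muEdges G.mu (edgesAt G p k l) ∧ quality τ G ≤ 1000 * qualityAt τ G p k l :=
  let ⟨k, l, hkl⟩ := exists_weight_lt_edgesAt hδ hp
  ⟨k, l, quality_le_qualityAt_of_weight_lt hτ0 hτ1 hδ hp hpP hkl⟩

lemma exists_subgraph_R_gt {τ : ℝ} (hτ0 : 0 ≤ τ) (hτ1 : τ ≤ 1) (C : ℝ) (S : Finset ℕ) :
    ∀ G : GCDGraph, 0 < G.density → (∀ p ∈ R G, (p : ℝ) ≤ C → p ∈ S) →
      ∃ G' : GCDGraph, IsSubgraph G' G ∧ 0 < G'.density ∧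
        (↑G'.P : Set ℕ) ⊆ ↑G.P ∪ (R G ∩ {p : ℕ | (p : ℝ) ≤ C}) ∧
        (∀ p ∈ R G', C < (p : ℝ)) ∧ quality τ G ≤ 1000 ^ S.card * quality τ G' := by
  induction S using Finset.induction_on with
  | empty =>
    intro G hδ hS
    refine ⟨G, .refl G, hδ, fun p hp => Or.inl hp, fun p hp => ?_, by simp⟩
    by_contra! hle
    simpa using hS p hp hle
  | insert s S hsS ih =>
    intro G hδ hS
    rw [card_insert_of_notMem hsS, pow_succ]
    by_cases hs : s ∈ R G ∧ (s : ℝ) ≤ C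
    · obtain ⟨k, l, hkl, hq⟩ := exists_quality_le_qualityAt hτ0 hτ1 hδ hs.1.1 hs.1.2.1
      set G₁ := G.subgraphAt hs.1.1 k l
      have hsub₁ : IsSubgraph G₁ G := isSubgraph_subgraphAt G _ hs.1.2.1 k l
      have hS₁ (p) (hp : p ∈ R G₁) (hpC : (p : ℝ) ≤ C) : p ∈ S := by
        have hps : p ≠ s := by rintro rfl; exact hp.2.1 (mem_insert_self p G.P)
        exact (mem_insert.1 (hS p (hsub₁.R_subset hp) hpC)).resolve_left hps
      obtain ⟨G', hsub', hδ', hP', hR', hq'⟩ := ih G₁ ((density_pos_iff G₁).2 hkl) hS₁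
      refine ⟨G', hsub'.trans hsub₁, hδ', fun p hp => ?_, hR', ?_⟩
      · rcases hP' hp with hp₁ | ⟨hpR, hpC⟩
        · rcases mem_insert.1 hp₁ with rfl | hpP
          · exact Or.inr hs
          · exact Or.inl hpP
        · exact Or.inr ⟨hsub₁.R_subset hpR, hpC⟩
      · calc quality τ G ≤ 1000 * quality τ G₁ := by rwa [quality_subgraphAt]
          _ ≤ 1000 * (1000 ^ S.card * quality τ G') := by gcongr
          _ = 1000 ^ S.card * 1000 * quality τ G' := by ring
    · have hS' (p) (hp : p ∈ R G) (hpC : (p : ℝ) ≤ C) : p ∈ S := by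
        have hps : p ≠ s := by rintro rfl; exact hs ⟨hp, hpC⟩
        exact (mem_insert.1 (hS p hp hpC)).resolve_left hps
      obtain ⟨G', hsub', hδ', hP', hR', hq'⟩ := ih G hδ hS'
      refine ⟨G', hsub', hδ', hP', hR', hq'.trans ?_⟩
      have := quality_nonneg hτ0 G'
      gcongr
      linarith [one_le_pow₀ (n := S.card) (by norm_num : (1 : ℝ) ≤ 1000)]

lemma thousand_pow_floor_C6_le_C7 {τ : ℝ} (M : ℝ) (hτ : τ ∈ Set.Ioo (0 : ℝ) (1 / 100)) :
    (1000 : ℝ) ^ ⌊C6 τ M⌋₊ ≤ C7 τ M := by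
  have hC1 : 1 < C1 τ := by
    rw [C1, lt_div_iff₀ hτ.1]
    linarith [hτ.2]
  have hC5 : 1000 ≤ C5 τ M := by
    refine le_trans ?_ (le_max_left _ _)
    rw [C3]
    nlinarith [one_le_pow₀ (n := 3) hC1.le]
  have hC6 : 0 ≤ C6 τ M := le_trans (by rw [C4]; positivity) (le_max_left _ _)
  calc (1000 : ℝ) ^ ⌊C6 τ M⌋₊ ≤ C5 τ M ^ ⌊C6 τ M⌋₊ := by gcongr
    _ = C5 τ M ^ (⌊C6 τ M⌋₊ : ℝ) := (Real.rpow_natCast _ _).symm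
    _ ≤ C7 τ M := Real.rpow_le_rpow_of_exponent_le (by linarith) (Nat.floor_le hC6)

end GCDGraph

theorem small_primes_bounded_loss_general (τ M : ℝ) (hτ : τ ∈ Set.Ioo (0 : ℝ) (1 / 100))
    (G : GCDGraph) (hδ : 0 < G.density) :
    ∃ G' : GCDGraph, IsSubgraph G' G ∧ 0 < G'.density ∧
      (↑G'.P : Set ℕ) ⊆ ↑G.P ∪ (R G ∩ {p : ℕ | (p : ℝ) ≤ C6 τ M}) ∧
      (∀ p ∈ R G', C6 τ M < (p : ℝ)) ∧
      quality τ G / C7 τ M ≤ quality τ G' := by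
  have hτ0 : 0 ≤ τ := hτ.1.le
  obtain ⟨G', hsub, hδ', hP', hR', hq⟩ :=
    exists_subgraph_R_gt hτ0 (by linarith [hτ.2]) (C6 τ M) (Icc 1 ⌊C6 τ M⌋₊) G hδ
      fun p hp hpC => mem_Icc.2 ⟨hp.1.one_lt.le, Nat.le_floor hpC⟩
  refine ⟨G', hsub, hδ', hP', hR', ?_⟩
  have hC7 := thousand_pow_floor_C6_le_C7 M hτ
  rw [Nat.card_Icc, Nat.add_sub_cancel] at hq
  rw [div_le_iff₀ ((by positivity : (0 : ℝ) < 1000 ^ _).trans_le hC7)]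
  calc quality τ G ≤ 1000 ^ ⌊C6 τ M⌋₊ * quality τ G' := hq
    _ ≤ C7 τ M * quality τ G' := by gcongr; exact quality_nonneg hτ0 G'
    _ = quality τ G' * C7 τ M := mul_comm _ _

/-- Bounded quality loss for small primes (`SmallPrimes`). -/
theorem small_primes_bounded_loss (τ M : ℝ) (hτ : τ ∈ Set.Ioo (0 : ℝ) (1 / 100)) (hM : 2 ≤ M)
    (G : GCDGraph) (hδ : 0 < G.density) :
    ∃ G' : GCDGraph, IsSubgraph G' G ∧ 0 < G'.density ∧
      (↑G'.P : Set ℕ) ⊆ ↑G.P ∪ (R G ∩ {p : ℕ | (p : ℝ) ≤ C6 τ M}) ∧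
      (∀ p ∈ R G', C6 τ M < (p : ℝ)) ∧
      quality τ G / C7 τ M ≤ quality τ G' :=
  small_primes_bounded_loss_general τ M hτ G hδ
end
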